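/- For every ν ∈ ℝ with |ν| ≥ 5/4, the function u ↦ u²·K_ν'(u) is strictly increasing on (0, ∞). -/

import Mathlib

open Real MeasureTheory Set Filter Topology

noncomputable def KI (k : ℕ) (ν u : ℝ) : ℝ :=
  ∫ t in Ioi (0:ℝ), Real.exp (-u * Real.cosh t) * (Real.cosh t ^ k * Real.cosh (ν * t))

lemma cosh_le_exp_abs (x : ℝ) : Real.cosh x ≤ Real.exp |x| := by
  rw [Real.cosh_eq]
  have h1 : Real.exp x ≤ Real.exp |x| := Real.exp_le_exp.2 (le_abs_self x)
  have h2 : Real.exp (-x) ≤ Real.exp |x| := Real.exp_le_exp.2 (neg_le_abs x)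
  linarith

lemma abs_sinh_le_exp_abs (x : ℝ) : |Real.sinh x| ≤ Real.exp |x| := by
  rw [Real.abs_sinh]
  calc Real.sinh |x| ≤ Real.cosh |x| := (Real.sinh_lt_cosh _).le
  _ ≤ Real.exp |(|x|)| := cosh_le_exp_abs _
  _ = Real.exp |x| := by rw [abs_abs]

lemma sq_div_le_cosh {t : ℝ} (ht : 0 ≤ t) : t^2/8 ≤ Real.cosh t := by
  have h1 : t/2 + 1 ≤ Real.exp (t/2) := Real.add_one_le_exp (t/2)
  have h2 : Real.exp t = Real.exp (t/2) * Real.exp (t/2) := by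
    rw [← Real.exp_add]; ring_nf
  have h3 : Real.cosh t = (Real.exp t + Real.exp (-t))/2 := Real.cosh_eq t
  have h4 : 0 < Real.exp (-t) := Real.exp_pos _
  nlinarith

lemma key_ineq {u : ℝ} (a : ℝ) (hu : 0 < u) {t : ℝ} (ht : 0 ≤ t) :
    a * t - u * Real.cosh t ≤ 2*(a+1)^2/u - t := by
  have h1 := sq_div_le_cosh ht
  have h2 : u * (t^2/8) ≤ u * Real.cosh t := by nlinarith
  have h3 : u * (2*(a+1)^2/u) = 2*(a+1)^2 := by field_simp
  nlinarith [sq_nonneg (u*t - 4*(a+1))]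

lemma integrableOn_exp_cosh_mul {u : ℝ} (hu : 0 < u) {g : ℝ → ℝ} (hg : Continuous g)
    {C a : ℝ} (hbound : ∀ t, 0 ≤ t → |g t| ≤ C * Real.exp (a * t)) :
    IntegrableOn (fun t => Real.exp (-u * Real.cosh t) * g t) (Ioi (0:ℝ)) := by
  have hC : 0 ≤ C := by
    have := hbound 0 le_rfl
    have h0 : (0:ℝ) ≤ |g 0| := abs_nonneg _
    simp only [mul_zero, Real.exp_zero, mul_one] at this
    linarith
  have hint : IntegrableOn (fun t => C * Real.exp (2*(a+1)^2/u) * Real.exp (-(1:ℝ)*t))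
      (Ioi (0:ℝ)) := (exp_neg_integrableOn_Ioi 0 one_pos).const_mul _
  apply hint.mono'
  · exact ((Real.continuous_exp.comp ((continuous_const.mul Real.continuous_cosh))).mul
      hg).aestronglyMeasurable
  · filter_upwards [ae_restrict_mem measurableSet_Ioi] with t ht
    have ht' : (0:ℝ) ≤ t := le_of_lt ht
    have h1 : ‖Real.exp (-u * Real.cosh t) * g t‖ = Real.exp (-u * Real.cosh t) * |g t| := by
      rw [norm_mul, Real.norm_eq_abs, Real.norm_eq_abs, abs_of_pos (Real.exp_pos _)]
    rw [h1]
    calc Real.exp (-u * Real.cosh t) * |g t|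
        ≤ Real.exp (-u * Real.cosh t) * (C * Real.exp (a*t)) := by
          exact mul_le_mul_of_nonneg_left (hbound t ht') (Real.exp_pos _).le
      _ = C * Real.exp (a*t - u * Real.cosh t) := by
          rw [neg_mul, Real.exp_neg, Real.exp_sub]; ring
      _ ≤ C * (Real.exp (2*(a+1)^2/u) * Real.exp (-(1:ℝ)*t)) := by
          apply mul_le_mul_of_nonneg_left _ hC
          rw [← Real.exp_add]
          apply Real.exp_le_exp.2
          have := key_ineq a hu ht'
          linarith
      _ = C * Real.exp (2*(a+1)^2/u) * Real.exp (-(1:ℝ)*t) := by ring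

lemma continuous_KI_integrand (k : ℕ) (ν x : ℝ) :
    Continuous (fun t => Real.exp (-x * Real.cosh t) * (Real.cosh t ^ k * Real.cosh (ν * t))) := by
  continuity

lemma integrableOn_KI (k : ℕ) (ν : ℝ) {u : ℝ} (hu : 0 < u) :
    IntegrableOn (fun t => Real.exp (-u * Real.cosh t) * (Real.cosh t ^ k * Real.cosh (ν * t)))
      (Ioi (0:ℝ)) := by
  apply integrableOn_exp_cosh_mul hu (by continuity) (C := 1) (a := k + |ν|)
  intro t ht
  have h1 : Real.cosh t ^ k ≤ Real.exp ((k:ℝ) * t) := by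
    calc Real.cosh t ^ k ≤ Real.exp |t| ^ k := pow_le_pow_left₀ (Real.cosh_pos t).le (cosh_le_exp_abs t) k
    _ = Real.exp ((k:ℝ) * t) := by rw [abs_of_nonneg ht, ← Real.exp_nat_mul]
  have h2 : Real.cosh (ν * t) ≤ Real.exp (|ν| * t) := by
    calc Real.cosh (ν * t) ≤ Real.exp |ν * t| := cosh_le_exp_abs _
    _ = Real.exp (|ν| * t) := by rw [abs_mul, abs_of_nonneg ht]
  have h3 : |Real.cosh t ^ k * Real.cosh (ν * t)| = Real.cosh t ^ k * Real.cosh (ν * t) := by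
    rw [abs_of_nonneg]
    positivity
  rw [h3, one_mul, add_mul, Real.exp_add]
  exact mul_le_mul h1 h2 (Real.cosh_pos _).le (Real.exp_pos _).le

lemma integrableOn_sinh_sinh (μ : ℝ) {u : ℝ} (hu : 0 < u) :
    IntegrableOn (fun t => Real.exp (-u * Real.cosh t) * (Real.sinh t * Real.sinh (μ * t)))
      (Ioi (0:ℝ)) := by
  apply integrableOn_exp_cosh_mul hu (by continuity) (C := 1) (a := 1 + |μ|)
  intro t ht
  have h1 : |Real.sinh t| ≤ Real.exp ((1:ℝ) * t) := by
    simpa [abs_of_nonneg ht] using abs_sinh_le_exp_abs t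
  have h2 : |Real.sinh (μ * t)| ≤ Real.exp (|μ| * t) := by
    calc |Real.sinh (μ * t)| ≤ Real.exp |μ * t| := abs_sinh_le_exp_abs _
    _ = Real.exp (|μ| * t) := by rw [abs_mul, abs_of_nonneg ht]
  rw [one_mul, abs_mul, add_mul, Real.exp_add]
  exact mul_le_mul h1 h2 (abs_nonneg _) (Real.exp_pos _).le

lemma hasDerivAt_KI (k : ℕ) (ν : ℝ) {u : ℝ} (hu : 0 < u) :
    HasDerivAt (KI k ν) (-(KI (k+1) ν u)) u := by
  have hball : ∀ x ∈ Metric.ball u (u/2), u/2 < x := by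
    intro x hx
    rw [Metric.mem_ball, Real.dist_eq, abs_sub_lt_iff] at hx
    linarith [hx.2]
  have hmain := hasDerivAt_integral_of_dominated_loc_of_deriv_le (s := Metric.ball u (u/2))
    (F := fun x t => Real.exp (-x * Real.cosh t) * (Real.cosh t ^ k * Real.cosh (ν * t)))
    (F' := fun x t => -(Real.exp (-x * Real.cosh t) * (Real.cosh t ^ (k+1) * Real.cosh (ν * t))))
    (μ := volume.restrict (Ioi (0:ℝ)))
    (bound := fun t => Real.exp (-(u/2) * Real.cosh t) * (Real.cosh t ^ (k+1) * Real.cosh (ν * t)))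
    (Metric.ball_mem_nhds u (half_pos hu))
    (Eventually.of_forall fun x => (continuous_KI_integrand k ν x).aestronglyMeasurable)
    (integrableOn_KI k ν hu)
    (((continuous_KI_integrand (k+1) ν u).neg).aestronglyMeasurable)
    ?_ (integrableOn_KI (k+1) ν (half_pos hu)) ?_
  · have h2 : (∫ t in Ioi (0:ℝ),
        -(Real.exp (-u * Real.cosh t) * (Real.cosh t ^ (k+1) * Real.cosh (ν * t))))
        = -(KI (k+1) ν u) := by
      rw [integral_neg]; rfl
    exact h2 ▸ hmain.2
  · apply Eventually.of_forall
    intro t x hx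
    have hx' := hball x hx
    have hpos : (0:ℝ) < Real.cosh t ^ (k+1) * Real.cosh (ν * t) := by positivity
    rw [norm_neg, norm_mul, Real.norm_eq_abs, Real.norm_eq_abs,
      abs_of_pos (Real.exp_pos _), abs_of_pos hpos]
    apply mul_le_mul_of_nonneg_right _ hpos.le
    apply Real.exp_le_exp.2
    have := Real.cosh_pos t
    nlinarith
  · apply Eventually.of_forall
    intro t x _
    have h1 : HasDerivAt (fun y => -y * Real.cosh t) (-Real.cosh t) x := by
      simpa using ((hasDerivAt_id x).neg.mul_const (Real.cosh t))
    have h2 := (h1.exp).mul_const (Real.cosh t ^ k * Real.cosh (ν * t))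
    refine h2.congr_deriv ?_
    show _ = -(Real.exp (-x * Real.cosh t) * (Real.cosh t ^ (k+1) * Real.cosh (ν * t)))
    rw [pow_succ]; ring

lemma KI_recurrence (μ : ℝ) {u : ℝ} (hu : 0 < u) :
    KI 0 (μ+1) u - KI 0 (μ-1) u = (2*μ/u) * KI 0 μ u := by
  set f : ℝ → ℝ := fun t => Real.exp (-u * Real.cosh t) * Real.sinh (μ * t) with hf
  set f' : ℝ → ℝ := fun t =>
    μ * (Real.exp (-u * Real.cosh t) * (Real.cosh t ^ 0 * Real.cosh (μ * t)))
    - u * (Real.exp (-u * Real.cosh t) * (Real.sinh t * Real.sinh (μ * t))) with hf'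
  have hderiv : ∀ t : ℝ, HasDerivAt f (f' t) t := by
    intro t
    have h1 : HasDerivAt (fun s => -u * Real.cosh s) (-u * Real.sinh t) t :=
      (Real.hasDerivAt_cosh t).const_mul (-u)
    have h2 := h1.exp
    have h3 : HasDerivAt (fun s => Real.sinh (μ * s)) (Real.cosh (μ * t) * μ) t := by
      simpa using ((hasDerivAt_id t).const_mul μ).sinh
    have h4 := h2.mul h3
    refine h4.congr_deriv ?_
    simp only [f', pow_zero]
    ring
  have hf'int : IntegrableOn f' (Ioi (0:ℝ)) :=
    ((integrableOn_KI 0 μ hu).const_mul μ).sub ((integrableOn_sinh_sinh μ hu).const_mul u)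
  have htend : Tendsto f atTop (𝓝 (0:ℝ)) := by
    have hbnd : ∀ᶠ t in atTop, ‖f t‖ ≤ (fun t => Real.exp (2*(|μ|+1)^2/u) * Real.exp (-t)) t := by
      filter_upwards [eventually_ge_atTop (0:ℝ)] with t ht
      have h1 : ‖f t‖ = Real.exp (-u * Real.cosh t) * |Real.sinh (μ*t)| := by
        rw [hf]; rw [norm_mul, Real.norm_eq_abs, Real.norm_eq_abs, abs_of_pos (Real.exp_pos _)]
      rw [h1]
      have h2 : |Real.sinh (μ*t)| ≤ Real.exp (|μ| * t) := by
        calc |Real.sinh (μ * t)| ≤ Real.exp |μ * t| := abs_sinh_le_exp_abs _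
        _ = Real.exp (|μ| * t) := by rw [abs_mul, abs_of_nonneg ht]
      calc Real.exp (-u * Real.cosh t) * |Real.sinh (μ*t)|
          ≤ Real.exp (-u * Real.cosh t) * Real.exp (|μ| * t) :=
            mul_le_mul_of_nonneg_left h2 (Real.exp_pos _).le
        _ = Real.exp (|μ| * t - u * Real.cosh t) := by
            rw [← Real.exp_add]; ring_nf
        _ ≤ Real.exp (2*(|μ|+1)^2/u - t) := Real.exp_le_exp.2 (key_ineq |μ| hu ht)
        _ = Real.exp (2*(|μ|+1)^2/u) * Real.exp (-t) := by rw [← Real.exp_add]; ring_nf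
    refine squeeze_zero_norm' hbnd ?_
    have h := Real.tendsto_exp_neg_atTop_nhds_zero
    simpa using h.const_mul (Real.exp (2*(|μ|+1)^2/u))
  have hFTC : ∫ t in Ioi (0:ℝ), f' t = 0 - f 0 :=
    integral_Ioi_of_hasDerivAt_of_tendsto (hderiv 0).continuousAt.continuousWithinAt
      (fun t _ => hderiv t) hf'int htend
  have hf0 : f 0 = 0 := by simp [hf]
  have hsplit : ∫ t in Ioi (0:ℝ), f' t
      = μ * KI 0 μ u - u * ∫ t in Ioi (0:ℝ),
          Real.exp (-u * Real.cosh t) * (Real.sinh t * Real.sinh (μ * t)) := by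
    rw [hf', integral_sub ((integrableOn_KI 0 μ hu).const_mul μ)
      ((integrableOn_sinh_sinh μ hu).const_mul u), integral_const_mul, integral_const_mul]
    rfl
  have hprod : ∀ t : ℝ, Real.sinh t * Real.sinh (μ * t)
      = (1/2) * (Real.cosh t ^ 0 * Real.cosh ((μ+1) * t))
        - (1/2) * (Real.cosh t ^ 0 * Real.cosh ((μ-1) * t)) := by
    intro t
    rw [show (μ+1)*t = μ*t + t by ring, show (μ-1)*t = μ*t - t by ring,
      Real.cosh_add, Real.cosh_sub]
    simp only [pow_zero]
    ring
  have hS : ∫ t in Ioi (0:ℝ), Real.exp (-u * Real.cosh t) * (Real.sinh t * Real.sinh (μ * t))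
      = (1/2) * KI 0 (μ+1) u - (1/2) * KI 0 (μ-1) u := by
    have hcongr : ∀ t ∈ Ioi (0:ℝ),
        Real.exp (-u * Real.cosh t) * (Real.sinh t * Real.sinh (μ * t))
        = (1/2) * (Real.exp (-u * Real.cosh t) * (Real.cosh t ^ 0 * Real.cosh ((μ+1) * t)))
          - (1/2) * (Real.exp (-u * Real.cosh t) * (Real.cosh t ^ 0 * Real.cosh ((μ-1) * t))) := by
      intro t _
      rw [hprod t]; ring
    rw [setIntegral_congr_fun measurableSet_Ioi hcongr,
      integral_sub ((integrableOn_KI 0 (μ+1) hu).const_mul _)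
        ((integrableOn_KI 0 (μ-1) hu).const_mul _),
      integral_const_mul, integral_const_mul]
    rfl
  rw [hsplit, hf0, hS] at hFTC
  have hKI := hFTC
  field_simp
  linarith [hKI]

lemma KI_succ_eq (k : ℕ) (ν : ℝ) {u : ℝ} (hu : 0 < u) :
    KI (k+1) ν u = (1/2) * KI k (ν+1) u + (1/2) * KI k (ν-1) u := by
  have hcongr : ∀ t ∈ Ioi (0:ℝ),
      Real.exp (-u * Real.cosh t) * (Real.cosh t ^ (k+1) * Real.cosh (ν * t))
      = (1/2) * (Real.exp (-u * Real.cosh t) * (Real.cosh t ^ k * Real.cosh ((ν+1) * t)))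
        + (1/2) * (Real.exp (-u * Real.cosh t) * (Real.cosh t ^ k * Real.cosh ((ν-1) * t))) := by
    intro t _
    rw [show (ν+1)*t = ν*t + t by ring, show (ν-1)*t = ν*t - t by ring,
      Real.cosh_add, Real.cosh_sub, pow_succ]
    ring
  show (∫ t in Ioi (0:ℝ), _) = _
  rw [setIntegral_congr_fun measurableSet_Ioi hcongr,
    integral_add ((integrableOn_KI k (ν+1) hu).const_mul _)
      ((integrableOn_KI k (ν-1) hu).const_mul _),
    integral_const_mul, integral_const_mul]
  rfl

lemma KI_two_eq (ν : ℝ) {u : ℝ} (hu : 0 < u) :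
    KI 2 ν u = (1/4) * KI 0 (ν+2) u + (1/2) * KI 0 ν u + (1/4) * KI 0 (ν-2) u := by
  have h1 := KI_succ_eq 1 ν hu
  have h2 := KI_succ_eq 0 (ν+1) hu
  have h3 := KI_succ_eq 0 (ν-1) hu
  rw [show ν+1+1 = ν+2 by ring, show ν+1-1 = ν by ring] at h2
  rw [show ν-1+1 = ν by ring, show ν-1-1 = ν-2 by ring] at h3
  norm_num at h1 h2 h3
  rw [h1, h2, h3]
  ring

lemma KI_pos (ν : ℝ) {u : ℝ} (hu : 0 < u) : 0 < KI 0 ν u := by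
  rw [KI]
  rw [setIntegral_pos_iff_support_of_nonneg_ae]
  · have hsupp : Function.support (fun t => Real.exp (-u * Real.cosh t)
        * (Real.cosh t ^ 0 * Real.cosh (ν * t))) = univ := by
      ext t
      simp only [Function.mem_support, mem_univ, iff_true]
      positivity
    rw [hsupp, univ_inter]
    simp
  · filter_upwards [] with t
    positivity
  · exact integrableOn_KI 0 ν hu

lemma KI_mono {μ ν : ℝ} (h : |μ| ≤ |ν|) {u : ℝ} (hu : 0 < u) : KI 0 μ u ≤ KI 0 ν u := by
  apply setIntegral_mono_on (integrableOn_KI 0 μ hu) (integrableOn_KI 0 ν hu) measurableSet_Ioi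
  intro t ht
  have ht' : (0:ℝ) ≤ t := le_of_lt ht
  apply mul_le_mul_of_nonneg_left _ (Real.exp_pos _).le
  apply mul_le_mul_of_nonneg_left _ (by positivity)
  apply Real.cosh_le_cosh.2
  rw [abs_mul, abs_mul]
  exact mul_le_mul_of_nonneg_right h (abs_nonneg t)

/-- The modified Bessel function of the second kind of order `ν`. -/
noncomputable def besselK (ν u : ℝ) : ℝ :=
  ∫ t in Ioi (0 : ℝ), Real.exp (-u * Real.cosh t) * Real.cosh (ν * t)

lemma besselK_eq_KI (ν : ℝ) : besselK ν = KI 0 ν := by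
  funext u
  simp [besselK, KI]

lemma hasDerivAt_main (w : ℝ) {u : ℝ} (hu : 0 < u) :
    HasDerivAt (fun x => x^2 * deriv (besselK w) x)
      ((u^2 + w^2 - w) * KI 0 w u - u * KI 0 (w-1) u) u := by
  have hg0 : HasDerivAt (fun x => x^2 * (-(KI 1 w x)))
      (2*u*(-(KI 1 w u)) + u^2 * (KI 2 w u)) u := by
    have h := (hasDerivAt_pow 2 u).mul ((hasDerivAt_KI 1 w hu).neg)
    refine h.congr_deriv ?_
    norm_num
  have hEq : (fun x => x^2 * deriv (besselK w) x) =ᶠ[𝓝 u] (fun x => x^2 * (-(KI 1 w x))) := by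
    filter_upwards [Ioi_mem_nhds hu] with x hx
    rw [besselK_eq_KI, (hasDerivAt_KI 0 w hx).deriv]
  have hmain := hg0.congr_of_eventuallyEq hEq
  refine hmain.congr_deriv ?_
  have h1 := KI_succ_eq 0 w hu
  norm_num at h1
  have h2 := KI_two_eq w hu
  have hrec := KI_recurrence w hu
  have hrecp := KI_recurrence (w+1) hu
  have hrecm := KI_recurrence (w-1) hu
  rw [show w+1+1 = w+2 by ring, show w+1-1 = w by ring] at hrecp
  rw [show w-1+1 = w by ring, show w-1-1 = w-2 by ring] at hrecm
  set L := KI 0 w u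
  set A := KI 0 (w+1) u
  set B := KI 0 (w-1) u
  set P := KI 0 (w+2) u
  set Q := KI 0 (w-2) u
  have hP : P = L + (2*(w+1)/u)*A := by linarith
  have hQ : Q = L - (2*(w-1)/u)*B := by linarith
  have hA : A = B + (2*w/u)*L := by linarith
  rw [h1, h2, hP, hQ, hA]
  field_simp
  ring

theorem sq_mul_besselK_deriv_strictMono (ν : ℝ) (hν : 5 / 4 ≤ |ν|) :
    StrictMonoOn (fun u : ℝ => u ^ 2 * deriv (besselK ν) u) (Ioi 0) := by
  have habs : besselK ν = besselK |ν| := by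
    funext u
    unfold besselK
    rcases abs_cases ν with ⟨h,_⟩|⟨h,_⟩
    · rw [h]
    · rw [h]
      congr 1
      funext t
      rw [show -ν * t = -(ν*t) by ring, Real.cosh_neg]
  set w := |ν| with hwdef
  have hw : 5/4 ≤ w := hν
  rw [habs]
  apply strictMonoOn_of_deriv_pos (convex_Ioi 0)
  · intro x hx
    exact ((hasDerivAt_main w hx).continuousAt).continuousWithinAt
  · intro x hx
    rw [interior_Ioi] at hx
    rw [(hasDerivAt_main w hx).deriv]
    have hL := KI_pos w hx
    have hB : KI 0 (w-1) x ≤ KI 0 w x := by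
      apply KI_mono _ hx
      rw [abs_of_nonneg (by linarith : (0:ℝ) ≤ w - 1), abs_of_nonneg (by linarith : (0:ℝ) ≤ w)]
      linarith
    have h2 : 0 < x^2 - x + w^2 - w := by
      nlinarith [sq_nonneg (2*x-1), mul_nonneg (by linarith : (0:ℝ) ≤ w - 5/4) (by linarith : (0:ℝ) ≤ w + 1/4)]
    have h3 : 0 ≤ x * (KI 0 w x - KI 0 (w-1) x) := mul_nonneg (le_of_lt hx) (by linarith)
    nlinarith [mul_pos h2 hL]
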